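/- A function f: Dⁿ → ℝ is α-bisubmodular if and only if its Lovász extension f^L: [-α,1]ⁿ → ℝ is convex. -/

import Mathlib

open Finset

/-- The three-element domain `D = {-α, 0, 1}`, abstractly. -/
inductive D3 : Type
  | neg : D3
  | zero : D3
  | one : D3
deriving DecidableEq

instance : Fintype D3 :=
  ⟨{D3.neg, D3.zero, D3.one}, by rintro (_ | _ | _) <;> simp⟩

namespace D3

/-- The embedding of `D3` into `ℝ` sending `neg ↦ -α`, `zero ↦ 0`, `one ↦ 1`. -/
def emb (α : ℝ) : D3 → ℝ
  | neg => -α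
  | zero => 0
  | one => 1

/-- The partial order `0 ≺ 1`, `0 ≺ -α`, with `1` and `-α` incomparable. -/
instance : PartialOrder D3 where
  le x y := x = y ∨ x = zero
  le_refl x := Or.inl rfl
  le_trans x y z hxy hyz := by
    rcases hxy with rfl | rfl
    · exact hyz
    · exact Or.inr rfl
  le_antisymm x y hxy hyx := by
    rcases hxy with rfl | rfl
    · rfl
    · rcases hyx with rfl | rfl <;> rfl

/-- `∧₀` : `1 ∧₀ (-α) = (-α) ∧₀ 1 = 0`, and min w.r.t. `≺` otherwise. -/
def meet0 (x y : D3) : D3 := if x = y then x else zero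

/-- `∨₀` : `1 ∨₀ (-α) = (-α) ∨₀ 1 = 0`, and max w.r.t. `≺` otherwise. -/
def join0 (x y : D3) : D3 :=
  if x = y then x else if x = zero then y else if y = zero then x else zero

/-- `∨₁` : `1 ∨₁ (-α) = (-α) ∨₁ 1 = 1`, and max w.r.t. `≺` otherwise. -/
def join1 (x y : D3) : D3 :=
  if x = y then x else if x = zero then y else if y = zero then x else one

end D3

/-- Componentwise `∧₀` on `Dⁿ`. -/
def vmeet0 {n : ℕ} (a b : Fin n → D3) : Fin n → D3 := fun i => D3.meet0 (a i) (b i)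

/-- Componentwise `∨₀` on `Dⁿ`. -/
def vjoin0 {n : ℕ} (a b : Fin n → D3) : Fin n → D3 := fun i => D3.join0 (a i) (b i)

/-- Componentwise `∨₁` on `Dⁿ`. -/
def vjoin1 {n : ℕ} (a b : Fin n → D3) : Fin n → D3 := fun i => D3.join1 (a i) (b i)

/-- `lam` is a probability distribution on `Dⁿ`. -/
def IsDist (n : ℕ) (lam : (Fin n → D3) → ℝ) : Prop :=
  (∀ a, 0 ≤ lam a ∧ lam a ≤ 1) ∧ ∑ a : Fin n → D3, lam a = 1

/-- `lam` has marginal vector `x`, i.e. `Σ_a lam(a)·a = x` in `ℝⁿ`. -/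
def HasMarginal (α : ℝ) (n : ℕ) (lam : (Fin n → D3) → ℝ) (x : Fin n → ℝ) : Prop :=
  ∀ i, ∑ a : Fin n → D3, lam a * D3.emb α (a i) = x i

/-- The support of `lam` forms a chain w.r.t. the componentwise order on `Dⁿ`. -/
def ChainSupp (n : ℕ) (lam : (Fin n → D3) → ℝ) : Prop :=
  ∀ a b : Fin n → D3, lam a ≠ 0 → lam b ≠ 0 → a ≤ b ∨ b ≤ a

/-- The box `[-α,1]ⁿ`. -/
def Box (α : ℝ) (n : ℕ) : Set (Fin n → ℝ) := {x | ∀ i, x i ∈ Set.Icc (-α) 1}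

/-- `f : Dⁿ → ℝ` is α-bisubmodular. -/
def AlphaBisub (α : ℝ) (n : ℕ) (f : (Fin n → D3) → ℝ) : Prop :=
  ∀ a b : Fin n → D3,
    f (vmeet0 a b) + α * f (vjoin0 a b) + (1 - α) * f (vjoin1 a b) ≤ f a + f b

/-- Number of zero coordinates. -/
def zc {n : ℕ} (c : Fin n → D3) : ℕ := (Finset.univ.filter fun i => c i = D3.zero).card

/-- The convex closure `f⁻(x)`. -/
noncomputable def cClos (α : ℝ) (n : ℕ) (f : (Fin n → D3) → ℝ) (x : Fin n → ℝ) : ℝ :=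
  sInf {y | ∃ lam, IsDist n lam ∧ HasMarginal α n lam x ∧ y = ∑ a : Fin n → D3, lam a * f a}

/-!
The chain distribution with marginal `x` is unique: on a chain, the mass above `a` is the least
of the masses of `{b | b i = a i}` over the nonzero coordinates `i` of `a`, and these masses are
read off from `x i`, since at most one of the values `1`, `-α` carries mass in coordinate `i`;
Möbius inversion over the finite poset `Dⁿ` then recovers the weights.

If `f` is α-bisubmodular, the chain distribution minimizes `μ ↦ ∑ μ(a) f(a)` among all
distributions with marginal `x`. Indeed, among the minimizers (a compact set) take one maximizing
`∑ μ(a) zc(a)²`. If its support contained incomparable `a`, `b`, moving mass `ε` from each of `a`,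
`b` to `a ∧₀ b`, `α·(a ∨₀ b)` and `(1-α)·(a ∨₁ b)` would keep the marginal (a coordinatewise
identity in `D`), not increase the cost (bisubmodularity), and strictly increase the potential.
So `f^L` is the convex closure of `f`, hence convex. Conversely, the chain distribution at the
midpoint of `a` and `b` is `½(δ_{a∧₀b} + α δ_{a∨₀b} + (1-α) δ_{a∨₁b})`, so midpoint convexity of
`f^L` is the bisubmodular inequality.
-/

theorem eq_max_sub_mul_zero {p q α : ℝ} (hp : 0 ≤ p) (hq : 0 ≤ q) (hα : 0 ≤ α)
    (hpq : p * q = 0) : p = max (p - α * q) 0 := by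
  rcases mul_eq_zero.1 hpq with rfl | rfl
  · simp [mul_nonneg hα hq]
  · simp [hp]

section ChainWeights

variable {ι : Type*} {w : ι → ℝ}

theorem sum_inter_eq_min_of_isChain [Preorder ι] [DecidableEq ι] (hw : ∀ a, 0 ≤ w a)
    (hc : IsChain (· ≤ ·) {a | w a ≠ 0}) {P Q : Finset ι} (hP : IsUpperSet (P : Set ι))
    (hQ : IsUpperSet (Q : Set ι)) :
    ∑ a ∈ P ∩ Q, w a = min (∑ a ∈ P, w a) (∑ a ∈ Q, w a) := by
  wlog hPQ : ∀ a ∈ P, w a ≠ 0 → a ∈ Q generalizing P Q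
  · have hQP : ∀ a ∈ Q, w a ≠ 0 → a ∈ P := by
      push Not at hPQ
      obtain ⟨a, haP, ha, haQ⟩ := hPQ
      intro b hbQ hb
      by_contra hbP
      rcases hc.total ha hb with hab | hba
      · exact hbP (hP hab haP)
      · exact haQ (hQ hba hbQ)
    rw [Finset.inter_comm, min_comm]
    exact this hQ hP hQP
  have hinter : ∑ a ∈ P ∩ Q, w a = ∑ a ∈ P, w a :=
    Finset.sum_subset Finset.inter_subset_left fun a haP haPQ => by
      by_contra ha
      exact haPQ (Finset.mem_inter.2 ⟨haP, hPQ a haP ha⟩)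
  rw [hinter, min_eq_left (hinter ▸ Finset.sum_le_sum_of_subset_of_nonneg
    Finset.inter_subset_right fun a _ _ => hw a)]

theorem sum_inf_eq_of_isChain [Fintype ι] [Preorder ι] [DecidableEq ι] {w' : ι → ℝ} {κ : Type*}
    (hw : ∀ a, 0 ≤ w a) (hw' : ∀ a, 0 ≤ w' a) (hc : IsChain (· ≤ ·) {a | w a ≠ 0})
    (hc' : IsChain (· ≤ ·) {a | w' a ≠ 0}) (s : Finset κ) {P : κ → Finset ι}
    (hP : ∀ k ∈ s, IsUpperSet (P k : Set ι)) (hPw : ∀ k ∈ s, ∑ a ∈ P k, w a = ∑ a ∈ P k, w' a)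
    (htot : ∑ a, w a = ∑ a, w' a) :
    ∑ a ∈ s.inf P, w a = ∑ a ∈ s.inf P, w' a := by
  induction s using Finset.cons_induction with
  | empty => exact htot
  | cons k s hk ih =>
    simp only [Finset.forall_mem_cons] at hP hPw
    have hup : IsUpperSet ((s.inf P : Finset ι) : Set ι) := fun a b hab ha => by
      simp only [Finset.mem_coe, Finset.mem_inf] at ha ⊢
      exact fun j hj => hP.2 j hj hab (ha j hj)
    rw [Finset.inf_cons, Finset.inf_eq_inter, sum_inter_eq_min_of_isChain hw hc hP.1 hup,
      sum_inter_eq_min_of_isChain hw' hc' hP.1 hup, hPw.1, ih hP.2 hPw.2]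

theorem eq_of_sum_filter_le_eq [Fintype ι] [PartialOrder ι] [DecidableLE ι] {M : Type*}
    [AddCommGroup M] {v v' : ι → M} (h : ∀ a, ∑ b with a ≤ b, v b = ∑ b with a ≤ b, v' b) :
    v = v' := by
  classical
  have hsplit : ∀ (u : ι → M) a, ∑ b with a ≤ b, u b = u a + ∑ b with a < b, u b := by
    intro u a
    rw [← Finset.sum_cons (s := {b | a < b}) (by simp)]
    congr 1
    ext b
    simp [le_iff_eq_or_lt, eq_comm]
  funext a
  induction a using WellFoundedGT.induction with
  | _ a ih =>
    have := h a
    rw [hsplit, hsplit,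
      Finset.sum_congr rfl fun b hb => ih b (Finset.mem_filter.1 hb).2] at this
    exact add_right_cancel this

end ChainWeights

namespace D3

instance : DecidableLE D3 := fun x y => decidable_of_iff (x = y ∨ x = zero) Iff.rfl

theorem emb_meet0_add_join0_add_join1 (α : ℝ) (u v : D3) :
    emb α (meet0 u v) + α * emb α (join0 u v) + (1 - α) * emb α (join1 u v) =
      emb α u + emb α v := by
  cases u <;> cases v <;> simp [emb, meet0, join0, join1] <;> ring

theorem emb_eq_sub (α : ℝ) (u : D3) :
    emb α u = (if u = one then 1 else 0) - α * (if u = neg then 1 else 0) := by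
  cases u <;> simp [emb]

theorem emb_mem_Icc {α : ℝ} (hα : 0 ≤ α) (u : D3) : emb α u ∈ Set.Icc (-α) 1 := by
  cases u <;> simp [emb] <;> linarith

theorem meet0_le_join0 (u v : D3) : meet0 u v ≤ join0 u v := by
  cases u <;> cases v <;> decide

theorem join0_le_join1 (u v : D3) : join0 u v ≤ join1 u v := by
  cases u <;> cases v <;> decide

def zeroInd (u : D3) : ℝ := if u = zero then 1 else 0

theorem zeroInd_mul_add_zeroInd_mul_le {α : ℝ} (hα : α ∈ Set.Icc 0 1) (u v u' v' : D3) :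
    zeroInd u * zeroInd u' + zeroInd v * zeroInd v' ≤
      zeroInd (meet0 u v) * zeroInd (meet0 u' v')
        + α * (zeroInd (join0 u v) * zeroInd (join0 u' v'))
        + (1 - α) * (zeroInd (join1 u v) * zeroInd (join1 u' v')) := by
  cases u <;> cases v <;> cases u' <;> cases v' <;>
    simp [zeroInd, meet0, join0, join1] <;> linarith [hα.1, hα.2]

theorem zeroInd_mul_add_zeroInd_mul_lt {α : ℝ} (hα : α ∈ Set.Icc 0 1) {u v u' v' : D3}
    (hu : u ≠ zero) (huv : u ≠ v) (hv' : v' ≠ zero) (huv' : u' ≠ v') :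
    zeroInd u * zeroInd u' + zeroInd v * zeroInd v' <
      zeroInd (meet0 u v) * zeroInd (meet0 u' v')
        + α * (zeroInd (join0 u v) * zeroInd (join0 u' v'))
        + (1 - α) * (zeroInd (join1 u v) * zeroInd (join1 u' v')) := by
  cases u <;> cases v <;> cases u' <;> cases v' <;>
    simp_all [zeroInd, meet0, join0, join1] <;> linarith [hα.1, hα.2]

end D3

instance {n : ℕ} : DecidableLE (Fin n → D3) := fun _ _ => Fintype.decidableForallFintype

section Potential

variable {n : ℕ}

theorem cast_zc (c : Fin n → D3) : (zc c : ℝ) = ∑ i, D3.zeroInd (c i) := by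
  rw [zc, Finset.natCast_card_filter]; rfl

theorem zc_sq_eq (c : Fin n → D3) :
    (zc c : ℝ) ^ 2 = ∑ i, ∑ j, D3.zeroInd (c i) * D3.zeroInd (c j) := by
  rw [sq, cast_zc, Finset.sum_mul_sum]

/- Writing `zc c ^ 2 = ∑ i, ∑ j, [c i = 0] [c j = 0]`, the inequality holds term by term, strictly
for a coordinate `i` witnessing `¬ a ≤ b` paired with a coordinate `j` witnessing `¬ b ≤ a`. -/
theorem zc_sq_add_zc_sq_lt {α : ℝ} (hα : α ∈ Set.Icc 0 1) {a b : Fin n → D3} (hab : ¬ a ≤ b)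
    (hba : ¬ b ≤ a) :
    (zc a : ℝ) ^ 2 + (zc b : ℝ) ^ 2 < (zc (vmeet0 a b) : ℝ) ^ 2
      + α * (zc (vjoin0 a b) : ℝ) ^ 2 + (1 - α) * (zc (vjoin1 a b) : ℝ) ^ 2 := by
  obtain ⟨i, hi⟩ : ∃ i, ¬ (a i = b i ∨ a i = D3.zero) := not_forall.1 hab
  obtain ⟨j, hj⟩ : ∃ j, ¬ (b j = a j ∨ b j = D3.zero) := not_forall.1 hba
  push Not at hi hj
  simp only [zc_sq_eq, Finset.mul_sum, ← Finset.sum_add_distrib]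
  refine Finset.sum_lt_sum (fun i _ => Finset.sum_le_sum fun j _ => ?_)
    ⟨i, Finset.mem_univ _, Finset.sum_lt_sum (fun j _ => ?_) ⟨j, Finset.mem_univ _, ?_⟩⟩
  · exact D3.zeroInd_mul_add_zeroInd_mul_le hα _ _ _ _
  · exact D3.zeroInd_mul_add_zeroInd_mul_le hα _ _ _ _
  · exact D3.zeroInd_mul_add_zeroInd_mul_lt hα hi.2 hi.1 hj.2 (Ne.symm hj.1)

end Potential

section Distributions

variable {α : ℝ} {n : ℕ} {μ ν : (Fin n → D3) → ℝ} {x y : Fin n → ℝ}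

/-- `μ` is the chain distribution `λ_x`. -/
def IsChainDist (α : ℝ) (n : ℕ) (μ : (Fin n → D3) → ℝ) (x : Fin n → ℝ) : Prop :=
  IsDist n μ ∧ HasMarginal α n μ x ∧ ChainSupp n μ

theorem isDist_iff : IsDist n μ ↔ (∀ a, 0 ≤ μ a) ∧ ∑ a, μ a = 1 := by
  refine ⟨fun h => ⟨fun a => (h.1 a).1, h.2⟩, fun ⟨h0, h1⟩ => ⟨fun a => ⟨h0 a, ?_⟩, h1⟩⟩
  exact h1 ▸ Finset.single_le_sum (fun b _ => h0 b) (Finset.mem_univ a)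

theorem hasMarginal_iff :
    HasMarginal α n μ x ↔ ∀ i, μ ⬝ᵥ (fun c => D3.emb α (c i)) = x i := Iff.rfl

theorem chainSupp_iff_isChain : ChainSupp n μ ↔ IsChain (· ≤ ·) {a | μ a ≠ 0} :=
  ⟨fun h _ ha _ hb _ => h _ _ ha hb, fun h _ _ ha hb => h.total ha hb⟩

theorem HasMarginal.eq_sub (hμ : HasMarginal α n μ x) (i : Fin n) :
    x i = ∑ b with b i = D3.one, μ b - α * ∑ b with b i = D3.neg, μ b := by
  rw [← hμ i]
  simp only [D3.emb_eq_sub, mul_sub, Finset.sum_sub_distrib, Finset.sum_filter, Finset.mul_sum,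
    mul_ite, mul_one, mul_zero]
  congr 1
  exact Finset.sum_congr rfl fun b _ => by split_ifs <;> ring

theorem ChainSupp.sum_one_mul_sum_neg (hμ : ChainSupp n μ) (i : Fin n) :
    (∑ b with b i = D3.one, μ b) * ∑ b with b i = D3.neg, μ b = 0 := by
  by_contra h
  obtain ⟨b, hb, hbμ⟩ := Finset.exists_ne_zero_of_sum_ne_zero (left_ne_zero_of_mul h)
  obtain ⟨c, hc, hcμ⟩ := Finset.exists_ne_zero_of_sum_ne_zero (right_ne_zero_of_mul h)
  rw [Finset.mem_filter] at hb hc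
  rcases hμ b c hbμ hcμ with hle | hle <;> rcases hle i with h' | h' <;> simp_all

theorem IsDist.smul_add_smul (hμ : IsDist n μ) (hν : IsDist n ν) {s t : ℝ} (hs : 0 ≤ s)
    (ht : 0 ≤ t) (hst : s + t = 1) : IsDist n (s • μ + t • ν) := by
  obtain ⟨hμ0, hμ1⟩ := isDist_iff.1 hμ
  obtain ⟨hν0, hν1⟩ := isDist_iff.1 hν
  refine isDist_iff.2 ⟨fun c => ?_, ?_⟩
  · exact add_nonneg (mul_nonneg hs (hμ0 c)) (mul_nonneg ht (hν0 c))
  · simp only [← dotProduct_one, add_dotProduct, smul_dotProduct] at hμ1 hν1 ⊢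
    rw [hμ1, hν1, smul_eq_mul, smul_eq_mul, mul_one, mul_one, hst]

theorem HasMarginal.smul_add_smul (hμ : HasMarginal α n μ x) (hν : HasMarginal α n ν y)
    (s t : ℝ) : HasMarginal α n (s • μ + t • ν) (s • x + t • y) := by
  refine hasMarginal_iff.2 fun i => ?_
  rw [add_dotProduct, smul_dotProduct, smul_dotProduct, hasMarginal_iff.1 hμ,
    hasMarginal_iff.1 hν]
  rfl

theorem isChainDist_single (a : Fin n → D3) :
    IsChainDist α n (Pi.single a 1) (D3.emb α ∘ a) := by
  refine ⟨isDist_iff.2 ⟨fun c => ?_, by rw [Finset.sum_pi_single']; simp⟩,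
    hasMarginal_iff.2 fun i => by rw [single_dotProduct, one_mul, Function.comp_apply],
    chainSupp_iff_isChain.2 <| (Set.subsingleton_singleton (a := a)).isChain.mono fun c hc => ?_⟩
  · rw [Pi.single_apply]
    split_ifs <;> norm_num
  · by_contra h
    exact hc (Pi.single_eq_of_ne h 1)

end Distributions

section Uniqueness

variable {α : ℝ} {n : ℕ} {μ ν : (Fin n → D3) → ℝ} {x : Fin n → ℝ}

theorem IsChainDist.sum_coord_eq (hα : 0 < α) (hμ : IsChainDist α n μ x)
    (hν : IsChainDist α n ν x) (i : Fin n) {u : D3} (hu : u ≠ D3.zero) :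
    ∑ b with b i = u, μ b = ∑ b with b i = u, ν b := by
  obtain ⟨hμd, hμx, hμc⟩ := hμ
  obtain ⟨hνd, hνx, hνc⟩ := hν
  have h0 : ∀ {ρ : (Fin n → D3) → ℝ}, IsDist n ρ → ∀ v, 0 ≤ ∑ b with b i = v, ρ b :=
    fun hρ _ => Finset.sum_nonneg fun b _ => (isDist_iff.1 hρ).1 b
  have hone : ∑ b with b i = D3.one, μ b = ∑ b with b i = D3.one, ν b := by
    rw [eq_max_sub_mul_zero (h0 hμd _) (h0 hμd _) hα.le (hμc.sum_one_mul_sum_neg i),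
      eq_max_sub_mul_zero (h0 hνd _) (h0 hνd _) hα.le (hνc.sum_one_mul_sum_neg i),
      ← hμx.eq_sub, ← hνx.eq_sub]
  cases u with
  | zero => exact absurd rfl hu
  | one => exact hone
  | neg =>
    have := (hμx.eq_sub i).symm.trans (hνx.eq_sub i)
    rw [hone] at this
    exact mul_left_cancel₀ hα.ne' (by linarith)

theorem filter_le_eq_inf (a : Fin n → D3) :
    ({b | a ≤ b} : Finset (Fin n → D3)) =
      ({i | a i ≠ D3.zero} : Finset (Fin n)).inf
        fun i => ({b | b i = a i} : Finset (Fin n → D3)) := by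
  ext b
  simp only [Finset.mem_filter, Finset.mem_univ, true_and, Finset.mem_inf]
  refine ⟨fun h i hi => ((h i).resolve_right hi).symm, fun h i => ?_⟩
  by_cases hi : a i = D3.zero
  · exact Or.inr hi
  · exact Or.inl (h i hi).symm

theorem isUpperSet_coord_eq {u : D3} (hu : u ≠ D3.zero) (i : Fin n) :
    IsUpperSet (({b | b i = u} : Finset (Fin n → D3)) : Set (Fin n → D3)) := by
  intro b c hbc hb
  simp only [Finset.coe_filter, Finset.mem_univ, true_and, Set.mem_ofPred_eq] at hb ⊢
  rcases hbc i with h | h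
  · rwa [← h]
  · exact absurd (hb ▸ h) hu

theorem IsChainDist.unique (hα : 0 < α) (hμ : IsChainDist α n μ x) (hν : IsChainDist α n ν x) :
    μ = ν := by
  refine eq_of_sum_filter_le_eq fun a => ?_
  rw [filter_le_eq_inf]
  refine sum_inf_eq_of_isChain (isDist_iff.1 hμ.1).1 (isDist_iff.1 hν.1).1
    (chainSupp_iff_isChain.1 hμ.2.2) (chainSupp_iff_isChain.1 hν.2.2) _ (fun i hi => ?_)
    (fun i hi => ?_) (hμ.1.2.trans hν.1.2.symm)
  · exact isUpperSet_coord_eq (Finset.mem_filter.1 hi).2 i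
  · exact hμ.sum_coord_eq hα hν i (Finset.mem_filter.1 hi).2

end Uniqueness

section Uncrossing

variable {α : ℝ} {n : ℕ}

def uncross (α : ℝ) (a b : Fin n → D3) : (Fin n → D3) → ℝ :=
  Pi.single (vmeet0 a b) 1 + α • Pi.single (vjoin0 a b) 1 + (1 - α) • Pi.single (vjoin1 a b) 1

theorem uncross_dotProduct (a b : Fin n → D3) (v : (Fin n → D3) → ℝ) :
    uncross α a b ⬝ᵥ v = v (vmeet0 a b) + α * v (vjoin0 a b) + (1 - α) * v (vjoin1 a b) := by
  simp only [uncross, add_dotProduct, smul_dotProduct, single_dotProduct, one_mul, smul_eq_mul]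

theorem uncross_dotProduct_one (a b : Fin n → D3) : uncross α a b ⬝ᵥ 1 = 2 := by
  rw [uncross_dotProduct]
  simp only [Pi.one_apply]
  ring

theorem uncross_dotProduct_emb (a b : Fin n → D3) (i : Fin n) :
    uncross α a b ⬝ᵥ (fun c => D3.emb α (c i)) = D3.emb α (a i) + D3.emb α (b i) :=
  (uncross_dotProduct a b _).trans (D3.emb_meet0_add_join0_add_join1 α (a i) (b i))

theorem uncross_nonneg (hα : α ∈ Set.Icc 0 1) (a b c : Fin n → D3) : 0 ≤ uncross α a b c := by
  have hsingle : ∀ d : Fin n → D3, 0 ≤ (Pi.single d 1 : (Fin n → D3) → ℝ) c := fun d => by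
    rw [Pi.single_apply]; split_ifs <;> norm_num
  simp only [uncross, Pi.add_apply, Pi.smul_apply, smul_eq_mul]
  exact add_nonneg (add_nonneg (hsingle _) (mul_nonneg hα.1 (hsingle _)))
    (mul_nonneg (sub_nonneg.2 hα.2) (hsingle _))

theorem chainSupp_smul_uncross (t : ℝ) (a b : Fin n → D3) :
    ChainSupp n (t • uncross α a b) := by
  have hle₁ : vmeet0 a b ≤ vjoin0 a b := fun i => D3.meet0_le_join0 (a i) (b i)
  have hle₂ : vjoin0 a b ≤ vjoin1 a b := fun i => D3.join0_le_join1 (a i) (b i)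
  have hchain : IsChain (· ≤ ·) ({vmeet0 a b, vjoin0 a b, vjoin1 a b} : Set (Fin n → D3)) := by
    rintro c (rfl | rfl | rfl) d (rfl | rfl | rfl) - <;>
      simp [hle₁, hle₂, hle₁.trans hle₂]
  refine chainSupp_iff_isChain.2 (hchain.mono fun c hc => ?_)
  contrapose! hc
  simp only [Set.mem_insert_iff, Set.mem_singleton_iff, not_or] at hc
  simp [uncross, Pi.single_apply, hc.1, hc.2.1, hc.2.2]

end Uncrossing

section Minimization

variable {α : ℝ} {n : ℕ} {μ : (Fin n → D3) → ℝ} {x : Fin n → ℝ}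

def distsWithMarginal (α : ℝ) (n : ℕ) (x : Fin n → ℝ) : Set ((Fin n → D3) → ℝ) :=
  {μ | IsDist n μ ∧ HasMarginal α n μ x}

theorem isCompact_distsWithMarginal : IsCompact (distsWithMarginal α n x) := by
  have hclosed : IsClosed (distsWithMarginal α n x) := by
    simp only [distsWithMarginal, IsDist, HasMarginal, Set.ofPred_and, Set.ofPred_forall]
    refine ((isClosed_iInter fun a => ?_).inter ?_).inter (isClosed_iInter fun i => ?_)
    · exact (isClosed_le continuous_const (continuous_apply a)).inter
        (isClosed_le (continuous_apply a) continuous_const)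
    · exact isClosed_eq (by fun_prop) continuous_const
    · exact isClosed_eq (by fun_prop) continuous_const
  exact (isCompact_univ_pi fun _ => isCompact_Icc (a := (0 : ℝ)) (b := 1)).of_isClosed_subset
    hclosed fun μ hμ => Set.mem_univ_pi.2 fun a => hμ.1.1 a

theorem dotProduct_add_smul_uncross (ε : ℝ) (a b : Fin n → D3) (v : (Fin n → D3) → ℝ) :
    (μ + ε • (uncross α a b - Pi.single a 1 - Pi.single b 1)) ⬝ᵥ v =
      μ ⬝ᵥ v + ε * (uncross α a b ⬝ᵥ v - v a - v b) := by
  simp only [add_dotProduct, smul_dotProduct, sub_dotProduct, single_dotProduct, one_mul,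
    smul_eq_mul]

theorem add_smul_uncross_mem (hα : α ∈ Set.Icc 0 1) (hμ : μ ∈ distsWithMarginal α n x)
    {a b : Fin n → D3} (hab : a ≠ b) {ε : ℝ} (hε : 0 ≤ ε) (hεa : ε ≤ μ a) (hεb : ε ≤ μ b) :
    μ + ε • (uncross α a b - Pi.single a 1 - Pi.single b 1) ∈ distsWithMarginal α n x := by
  obtain ⟨hμ0, hμ1⟩ := isDist_iff.1 hμ.1
  refine ⟨isDist_iff.2 ⟨fun c => ?_, ?_⟩, hasMarginal_iff.2 fun i => ?_⟩
  · have hrest : 0 ≤ μ c - ε * (Pi.single a 1 : (Fin n → D3) → ℝ) c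
        - ε * (Pi.single b 1 : (Fin n → D3) → ℝ) c := by
      simp only [Pi.single_apply]
      split_ifs with hca hcb <;> subst_vars
      · exact absurd rfl hab
      all_goals linarith [hμ0 c]
    have := mul_nonneg hε (uncross_nonneg hα a b c)
    simp only [Pi.add_apply, Pi.smul_apply, Pi.sub_apply, smul_eq_mul]
    linarith
  · rw [← dotProduct_one, dotProduct_add_smul_uncross, dotProduct_one, hμ1,
      uncross_dotProduct_one]
    simp only [Pi.one_apply]
    ring
  · rw [dotProduct_add_smul_uncross, uncross_dotProduct_emb, hasMarginal_iff.1 hμ.2 i]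
    ring

theorem AlphaBisub.exists_isChainDist_isMinOn (hα : α ∈ Set.Icc 0 1) {f : (Fin n → D3) → ℝ}
    (hf : AlphaBisub α n f) (hne : (distsWithMarginal α n x).Nonempty) :
    ∃ μ, IsChainDist α n μ x ∧ IsMinOn (· ⬝ᵥ f) (distsWithMarginal α n x) μ := by
  set K := distsWithMarginal α n x
  obtain ⟨μ₀, hμ₀, hmin⟩ := isCompact_distsWithMarginal.exists_isMinOn hne
    (continuous_id.dotProduct continuous_const).continuousOn
  set K' := K ∩ {μ | μ ⬝ᵥ f ≤ μ₀ ⬝ᵥ f}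
  have hK' : IsCompact K' := isCompact_distsWithMarginal.inter_right
    (isClosed_le (continuous_id.dotProduct continuous_const) continuous_const)
  obtain ⟨μ, hμ, hmax⟩ := hK'.exists_isMaxOn ⟨μ₀, hμ₀, le_refl (μ₀ ⬝ᵥ f)⟩
    (continuous_id.dotProduct (continuous_const (y := fun c => (zc c : ℝ) ^ 2))).continuousOn
  refine ⟨μ, ⟨hμ.1.1, hμ.1.2, fun a b ha hb => ?_⟩,
    isMinOn_iff.2 fun ν hν => hμ.2.trans (isMinOn_iff.1 hmin ν hν)⟩
  by_contra! hab
  have hab_ne : a ≠ b := fun h => hab.1 (h ▸ le_rfl)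
  set ε := min (μ a) (μ b)
  have hε : 0 < ε := lt_min ((isDist_iff.1 hμ.1.1).1 a |>.lt_of_ne' ha)
    ((isDist_iff.1 hμ.1.1).1 b |>.lt_of_ne' hb)
  set μ' := μ + ε • (uncross α a b - Pi.single a 1 - Pi.single b 1)
  have hμ'K : μ' ∈ K :=
    add_smul_uncross_mem hα hμ.1 hab_ne hε.le (min_le_left _ _) (min_le_right _ _)
  have hμ'f : μ' ⬝ᵥ f ≤ μ ⬝ᵥ f := by
    have := mul_nonneg hε.le (sub_nonneg.2 (hf a b))
    rw [dotProduct_add_smul_uncross, uncross_dotProduct]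
    linarith
  have hμ'zc : μ ⬝ᵥ (fun c => (zc c : ℝ) ^ 2) < μ' ⬝ᵥ (fun c => (zc c : ℝ) ^ 2) := by
    have := mul_pos hε (sub_pos.2 (zc_sq_add_zc_sq_lt hα hab.1 hab.2))
    rw [dotProduct_add_smul_uncross, uncross_dotProduct]
    linarith
  exact (isMaxOn_iff.1 hmax μ' ⟨hμ'K, hμ'f.trans hμ.2⟩).not_gt hμ'zc

end Minimization

section Lovasz

variable {α : ℝ} {n : ℕ} {μ ν : (Fin n → D3) → ℝ} {x : Fin n → ℝ}

theorem convex_box : Convex ℝ (Box α n) :=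
  fun _ hx _ hy _ _ hs ht hst i => convex_Icc (-α) 1 (hx i) (hy i) hs ht hst

theorem AlphaBisub.dotProduct_le (hα : α ∈ Set.Ioc 0 1) {f : (Fin n → D3) → ℝ}
    (hf : AlphaBisub α n f) (hμ : IsChainDist α n μ x) (hν : IsDist n ν)
    (hνx : HasMarginal α n ν x) : μ ⬝ᵥ f ≤ ν ⬝ᵥ f := by
  obtain ⟨ρ, hρ, hmin⟩ :=
    hf.exists_isChainDist_isMinOn (Set.Ioc_subset_Icc_self hα) ⟨ν, hν, hνx⟩
  rw [hμ.unique hα.1 hρ]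
  exact isMinOn_iff.1 hmin ν ⟨hν, hνx⟩

theorem isChainDist_half_uncross (hα : α ∈ Set.Icc 0 1) (a b : Fin n → D3) :
    IsChainDist α n ((1 / 2 : ℝ) • uncross α a b)
      ((1 / 2 : ℝ) • (D3.emb α ∘ a) + (1 / 2 : ℝ) • (D3.emb α ∘ b)) := by
  refine ⟨isDist_iff.2 ⟨fun c => mul_nonneg (by norm_num) (uncross_nonneg hα a b c), ?_⟩,
    hasMarginal_iff.2 fun i => ?_, chainSupp_smul_uncross _ a b⟩
  · rw [← dotProduct_one, smul_dotProduct, uncross_dotProduct_one]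
    norm_num
  · rw [smul_dotProduct, uncross_dotProduct_emb]
    simp only [Pi.add_apply, Pi.smul_apply, Function.comp_apply, smul_eq_mul]
    ring

end Lovasz

/-- `f` is α-bisubmodular iff its Lovász extension is convex. -/
theorem stmt11 (α : ℝ) (hα : α ∈ Set.Ioc (0 : ℝ) 1) (n : ℕ) (f : (Fin n → D3) → ℝ)
    (Λ : (Fin n → ℝ) → (Fin n → D3) → ℝ)
    (hΛ : ∀ x ∈ Box α n, IsDist n (Λ x) ∧ HasMarginal α n (Λ x) x ∧ ChainSupp n (Λ x)) :
    AlphaBisub α n f ↔ ConvexOn ℝ (Box α n) fun x => ∑ a : Fin n → D3, Λ x a * f a := by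
  constructor
  · refine fun hf => ⟨convex_box, fun x hx y hy s t hs ht hst => ?_⟩
    obtain ⟨hxd, hxm, -⟩ := hΛ x hx
    obtain ⟨hyd, hym, -⟩ := hΛ y hy
    have := hf.dotProduct_le hα (hΛ _ (convex_box hx hy hs ht hst))
      (hxd.smul_add_smul hyd hs ht hst) (hxm.smul_add_smul hym s t)
    rwa [add_dotProduct, smul_dotProduct, smul_dotProduct] at this
  · intro hconv a b
    have hemb (c : Fin n → D3) : D3.emb α ∘ c ∈ Box α n := fun i => D3.emb_mem_Icc hα.1.le (c i)
    have hΛa := IsChainDist.unique hα.1 (hΛ _ (hemb a)) (isChainDist_single a)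
    have hΛb := IsChainDist.unique hα.1 (hΛ _ (hemb b)) (isChainDist_single b)
    have hΛab := IsChainDist.unique hα.1
      (hΛ _ (convex_box (hemb a) (hemb b) one_half_pos.le one_half_pos.le (add_halves 1)))
      (isChainDist_half_uncross (Set.Ioc_subset_Icc_self hα) a b)
    have hconv_ab := hconv.2 (hemb a) (hemb b) one_half_pos.le one_half_pos.le (add_halves 1)
    change Λ _ ⬝ᵥ f ≤ (1 / 2 : ℝ) • (Λ _ ⬝ᵥ f) + (1 / 2 : ℝ) • (Λ _ ⬝ᵥ f) at hconv_ab
    rw [hΛab, hΛa, hΛb, smul_dotProduct, uncross_dotProduct, single_dotProduct,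
      single_dotProduct, smul_eq_mul, smul_eq_mul, smul_eq_mul] at hconv_ab
    linarith
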